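/- The function u₃ := ∂_t³u satisfies, for all x ∈ Ω and 0 < t < T, ∂_t²u₃(x,t) = (Au₃)(x,t) + ∫₀ᵗ Σ_{|α|≤2} b_α^{(3)}(x,t,η) ∂_x^α u₃(x,η) dη + (∂_t³R)(x,t) f(x) + Σ_{|α|≤2} b_α^{(3)}(x,t,0) ∂_x^α( R(·,0) f )(x), together with the initial conditions u₃(x,0) = (∂_t R)(x,0) f(x) and ∂_t u₃(x,0) = A( R(·,0) f )(x) + (∂_t²R)(x,0) f(x) for all x ∈ Ω. -/

import Mathlib

open MeasureTheory

noncomputable def pd {n : ℕ} (i : Fin n) (v : (Fin n → ℝ) → ℝ) (x : Fin n → ℝ) : ℝ :=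
  fderiv ℝ v x (Pi.single i 1)

noncomputable def opA {n : ℕ} (a : Fin n → Fin n → (Fin n → ℝ) → ℝ)
    (v : (Fin n → ℝ) → ℝ) (x : Fin n → ℝ) : ℝ :=
  ∑ i, ∑ j, pd i (fun y => a i j y * pd j v y) x

noncomputable def tder {n : ℕ} (k : ℕ) (u : (Fin n → ℝ) → ℝ → ℝ)
    (x : Fin n → ℝ) (t : ℝ) : ℝ :=
  deriv^[k] (fun s => u x s) t

noncomputable def memTerm {n : ℕ}
    (b0 : (Fin n → ℝ) → ℝ → ℝ → ℝ)
    (b1 : Fin n → (Fin n → ℝ) → ℝ → ℝ → ℝ)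
    (b2 : Fin n → Fin n → (Fin n → ℝ) → ℝ → ℝ → ℝ)
    (u : (Fin n → ℝ) → ℝ → ℝ) (x : Fin n → ℝ) (t : ℝ) : ℝ :=
  ∫ η in (0:ℝ)..t,
    (b0 x t η * u x η + (∑ i, b1 i x t η * pd i (fun y => u y η) x)
      + ∑ i, ∑ j, b2 i j x t η * pd i (pd j (fun y => u y η)) x)

noncomputable def energy {n : ℕ} (Ω : Set (Fin n → ℝ))
    (a : Fin n → Fin n → (Fin n → ℝ) → ℝ)
    (v : (Fin n → ℝ) → ℝ → ℝ) (t : ℝ) : ℝ :=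
  ∫ x in Ω, ((tder 1 v x t) ^ 2
    + ∑ i, ∑ j, a i j x * pd i (fun y => v y t) x * pd j (fun y => v y t) x)

def CoeffOK {n : ℕ} (a : Fin n → Fin n → (Fin n → ℝ) → ℝ) : Prop :=
  (∀ i j x, a i j x = a j i x) ∧
  (∀ i j, ContDiff ℝ 1 (a i j)) ∧
  (∃ M : ℝ, ∀ i j x, |a i j x| ≤ M ∧ ‖fderiv ℝ (a i j) x‖ ≤ M) ∧
  (∃ μ₀ > (0:ℝ), ∀ x ξ : Fin n → ℝ,
    μ₀ * (∑ i, ξ i ^ 2) ≤ ∑ i, ∑ j, a i j x * ξ i * ξ j)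

def SmoothBdd3 {n : ℕ} (b : (Fin n → ℝ) → ℝ → ℝ → ℝ) : Prop :=
  ContDiff ℝ (⊤ : ℕ∞) (fun p : (Fin n → ℝ) × ℝ × ℝ => b p.1 p.2.1 p.2.2) ∧
  ∀ k : ℕ, ∃ M : ℝ, ∀ p : (Fin n → ℝ) × ℝ × ℝ,
    ‖iteratedFDeriv ℝ k (fun q : (Fin n → ℝ) × ℝ × ℝ => b q.1 q.2.1 q.2.2) p‖ ≤ M

def SmoothBdd2 {n : ℕ} (R : (Fin n → ℝ) → ℝ → ℝ) : Prop :=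
  ContDiff ℝ (⊤ : ℕ∞) (fun p : (Fin n → ℝ) × ℝ => R p.1 p.2) ∧
  ∀ k : ℕ, ∃ M : ℝ, ∀ p : (Fin n → ℝ) × ℝ,
    ‖iteratedFDeriv ℝ k (fun q : (Fin n → ℝ) × ℝ => R q.1 q.2) p‖ ≤ M

noncomputable def ker1 {n : ℕ} (b : (Fin n → ℝ) → ℝ → ℝ → ℝ)
    (x : Fin n → ℝ) (t η : ℝ) : ℝ :=
  b x t t + ∫ ξ in η..t, deriv (fun s => b x s ξ) t

noncomputable def L2n {n : ℕ} (Ω : Set (Fin n → ℝ)) (v : (Fin n → ℝ) → ℝ) : ℝ :=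
  Real.sqrt (∫ x in Ω, (v x) ^ 2)

noncomputable def H1n {n : ℕ} (Ω : Set (Fin n → ℝ)) (v : (Fin n → ℝ) → ℝ) : ℝ :=
  Real.sqrt (∫ x in Ω, ((v x) ^ 2 + ∑ i, (pd i v x) ^ 2))

noncomputable def H2n {n : ℕ} (Ω : Set (Fin n → ℝ)) (v : (Fin n → ℝ) → ℝ) : ℝ :=
  Real.sqrt (∫ x in Ω, ((v x) ^ 2 + (∑ i, (pd i v x) ^ 2)
    + ∑ i, ∑ j, (pd i (pd j v) x) ^ 2))

section DD
variable {H : Type*} [NormedAddCommGroup H] [NormedSpace ℝ H]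

lemma infty_le {m : WithTop ℕ∞} : m + 1 ≤ ((⊤:ℕ∞) : WithTop ℕ∞) → True := fun _ => trivial

example : (1 : WithTop ℕ∞) ≤ ((⊤:ℕ∞) : WithTop ℕ∞) := by exact_mod_cast le_top

noncomputable def dd (U : H → ℝ) (v : H) (p : H) : ℝ := fderiv ℝ U p v

lemma contDiff_dd {U : H → ℝ} (hU : ContDiff ℝ (⊤:ℕ∞) U) (v : H) :
    ContDiff ℝ (⊤:ℕ∞) (dd U v) :=
  (hU.fderiv_right (by exact_mod_cast le_top)).clm_apply contDiff_const

lemma dd_curve {U : H → ℝ} (hU : ContDiff ℝ (⊤:ℕ∞) U) {c : ℝ → H} {v : H} {s : ℝ}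
    (hc : HasDerivAt c v s) : HasDerivAt (fun τ => U (c τ)) (dd U v (c s)) s := by
  have h1 : HasFDerivAt U (fderiv ℝ U (c s)) (c s) :=
    (hU.differentiable (by simp) _).hasFDerivAt
  exact h1.comp_hasDerivAt s hc

lemma dd_symm {U : H → ℝ} (hU : ContDiff ℝ (⊤:ℕ∞) U) (v w p : H) :
    dd (dd U v) w p = dd (dd U w) v p := by
  have hFd : ContDiff ℝ (⊤:ℕ∞) (fderiv ℝ U) := hU.fderiv_right (by exact_mod_cast le_top)
  have hFdd : HasFDerivAt (fderiv ℝ U) (fderiv ℝ (fderiv ℝ U) p) p :=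
    (hFd.differentiable (by simp) p).hasFDerivAt
  have key : ∀ v w : H, dd (dd U v) w p = (fderiv ℝ (fderiv ℝ U) p w) v := by
    intro v w
    have happ : HasFDerivAt (fun q => fderiv ℝ U q v)
        ((ContinuousLinearMap.apply ℝ ℝ v).comp (fderiv ℝ (fderiv ℝ U) p)) p :=
      (ContinuousLinearMap.apply ℝ ℝ v).hasFDerivAt.comp p hFdd
    show (fderiv ℝ (dd U v) p) w = _
    rw [show dd U v = (fun q => fderiv ℝ U q v) from rfl, happ.fderiv]; rfl
  rw [key v w, key w v]
  exact (second_derivative_symmetric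
    (fun y => (hU.differentiable (by simp) y).hasFDerivAt) hFdd w v)

end DD

section Slice
variable {E : Type*} [NormedAddCommGroup E] [NormedSpace ℝ E]

lemma slice_hasDerivAt {U : E × ℝ → ℝ} (hU : ContDiff ℝ (⊤:ℕ∞) U) (x : E) (t : ℝ) :
    HasDerivAt (fun s => U (x, s)) (dd U (0,1) (x,t)) t :=
  dd_curve hU ((hasDerivAt_const t x).prodMk (hasDerivAt_id t))

lemma slice_fderiv_apply {U : E × ℝ → ℝ} (hU : ContDiff ℝ (⊤:ℕ∞) U) (x : E) (t : ℝ) (e : E) :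
    fderiv ℝ (fun y => U (y, t)) x e = dd U (e, 0) (x, t) := by
  have hh : HasFDerivAt (fun y => U (y, t))
      ((fderiv ℝ U (x,t)).comp (ContinuousLinearMap.inl ℝ E ℝ)) x :=
    ((hU.differentiable (by simp) (x,t)).hasFDerivAt.comp x
      (hasFDerivAt_prodMk_left x t))
  rw [hh.fderiv]; rfl

lemma contDiff_sliceT {U : E × ℝ → ℝ} (hU : ContDiff ℝ (⊤:ℕ∞) U) (x : E) :
    ContDiff ℝ (⊤:ℕ∞) (fun s : ℝ => U (x, s)) :=
  hU.comp (contDiff_const.prodMk contDiff_id)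

lemma contDiff_sliceX {U : E × ℝ → ℝ} (hU : ContDiff ℝ (⊤:ℕ∞) U) (t : ℝ) :
    ContDiff ℝ (⊤:ℕ∞) (fun y : E => U (y, t)) :=
  hU.comp (contDiff_id.prodMk contDiff_const)

noncomputable def Dt (U : E × ℝ → ℝ) : E × ℝ → ℝ := fun p => deriv (fun s => U (p.1, s)) p.2

lemma Dt_eq {U : E × ℝ → ℝ} (hU : ContDiff ℝ (⊤:ℕ∞) U) : Dt U = dd U (0,1) :=
  funext fun p => (slice_hasDerivAt hU p.1 p.2).deriv

lemma contDiff_Dt {U : E × ℝ → ℝ} (hU : ContDiff ℝ (⊤:ℕ∞) U) : ContDiff ℝ (⊤:ℕ∞) (Dt U) := by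
  rw [Dt_eq hU]; exact contDiff_dd hU _

lemma hasDerivAt_sliceT {U : E × ℝ → ℝ} (hU : ContDiff ℝ (⊤:ℕ∞) U) (x : E) (t : ℝ) :
    HasDerivAt (fun s => U (x, s)) (Dt U (x, t)) t := by
  rw [Dt_eq hU]; exact slice_hasDerivAt hU x t

noncomputable def DxV (e : E) (U : E × ℝ → ℝ) : E × ℝ → ℝ :=
  fun p => fderiv ℝ (fun y => U (y, p.2)) p.1 e

lemma DxV_eq {U : E × ℝ → ℝ} (hU : ContDiff ℝ (⊤:ℕ∞) U) (e : E) : DxV e U = dd U (e, 0) :=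
  funext fun p => slice_fderiv_apply hU p.1 p.2 e

lemma contDiff_DxV {U : E × ℝ → ℝ} (hU : ContDiff ℝ (⊤:ℕ∞) U) (e : E) :
    ContDiff ℝ (⊤:ℕ∞) (DxV e U) := by
  rw [DxV_eq hU]; exact contDiff_dd hU _

lemma Dt_DxV_comm {U : E × ℝ → ℝ} (hU : ContDiff ℝ (⊤:ℕ∞) U) (e : E) :
    Dt (DxV e U) = DxV e (Dt U) := by
  rw [DxV_eq hU, Dt_eq hU, Dt_eq (contDiff_dd hU _), DxV_eq (contDiff_dd hU _)]
  funext p; exact dd_symm hU _ _ p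

lemma contDiff_DtIter {U : E × ℝ → ℝ} (hU : ContDiff ℝ (⊤:ℕ∞) U) (k : ℕ) :
    ContDiff ℝ (⊤:ℕ∞) (Dt^[k] U) := by
  induction k generalizing U with
  | zero => exact hU
  | succ k ih => rw [Function.iterate_succ_apply]; exact ih (contDiff_Dt hU)

omit [NormedAddCommGroup E] [NormedSpace ℝ E] in
lemma DtIter_eq_deriv_iter {U : E × ℝ → ℝ} (k : ℕ) (x : E) (t : ℝ) :
    Dt^[k] U (x, t) = deriv^[k] (fun s => U (x, s)) t := by
  induction k generalizing t with
  | zero => rfl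
  | succ k ih =>
      rw [Function.iterate_succ_apply' Dt k U, Function.iterate_succ_apply' deriv k]
      show deriv (fun s => Dt^[k] U (x, s)) t = _
      congr 1
      funext s; exact ih s

lemma DxV_DtIter_comm {U : E × ℝ → ℝ} (hU : ContDiff ℝ (⊤:ℕ∞) U) (e : E) (k : ℕ) :
    DxV e (Dt^[k] U) = Dt^[k] (DxV e U) := by
  induction k generalizing U with
  | zero => rfl
  | succ k ih =>
      rw [Function.iterate_succ_apply' Dt k U, ← Dt_DxV_comm (contDiff_DtIter hU k) e,
        ih hU, Function.iterate_succ_apply' Dt k (DxV e U)]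
end Slice

section Param

lemma hasFDerivAt_paramInt {F : (ℝ×ℝ)×ℝ → ℝ} (hF : ContDiff ℝ (⊤:ℕ∞) F) (x₀ : ℝ×ℝ) :
    HasFDerivAt (fun x : ℝ×ℝ => ∫ σ in (0:ℝ)..1, F (x,σ))
      (∫ σ in (0:ℝ)..1, (fderiv ℝ F (x₀,σ)).comp (ContinuousLinearMap.inl ℝ (ℝ×ℝ) ℝ)) x₀ := by
  have hFd : Continuous (fderiv ℝ F) :=
    (hF.fderiv_right (m := (⊤:ℕ∞)) (by exact_mod_cast le_top)).continuous
  have hFc : Continuous F := hF.continuous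
  set F' : (ℝ×ℝ) → ℝ → ((ℝ×ℝ) →L[ℝ] ℝ) :=
    fun x σ => (fderiv ℝ F (x,σ)).comp (ContinuousLinearMap.inl ℝ (ℝ×ℝ) ℝ) with hF'
  have hF'c : Continuous fun q : (ℝ×ℝ)×ℝ => F' q.1 q.2 := by
    apply Continuous.clm_comp _ continuous_const
    exact hFd.comp (by fun_prop)
  -- bound on compact set
  obtain ⟨C, hC⟩ := (((isCompact_closedBall x₀ 1).prod isCompact_Icc)).exists_bound_of_continuousOn
    (hF'c.continuousOn (s := Metric.closedBall x₀ 1 ×ˢ Set.Icc (0:ℝ) 1))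
  apply intervalIntegral.hasFDerivAt_integral_of_dominated_of_fderiv_le
    (F := fun x σ => F (x,σ)) (F' := F') (bound := fun _ => C) (s := Metric.ball x₀ 1) (Metric.ball_mem_nhds _ one_pos)
  · exact Filter.Eventually.of_forall fun x =>
      (hFc.comp (continuous_const.prodMk continuous_id)).aestronglyMeasurable
  · exact (hFc.comp (continuous_const.prodMk continuous_id)).intervalIntegrable 0 1
  · exact (hF'c.comp (continuous_const.prodMk continuous_id)).aestronglyMeasurable
  · refine Filter.Eventually.of_forall fun σ hσ x hx => hC (x,σ) ?_
    refine ⟨Metric.ball_subset_closedBall hx, ?_⟩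
    have : σ ∈ Set.Ioc (0:ℝ) 1 := by simpa [Set.uIoc_of_le (by norm_num : (0:ℝ) ≤ 1)] using hσ
    exact ⟨le_of_lt this.1, this.2⟩
  · exact intervalIntegrable_const
  · refine Filter.Eventually.of_forall fun σ hσ x hx => ?_
    exact (hF.differentiable (by simp) (x,σ)).hasFDerivAt.comp x
      (hasFDerivAt_prodMk_left x σ)

lemma contDiff_paramInt : ∀ (k:ℕ) {F : (ℝ×ℝ)×ℝ → ℝ}, ContDiff ℝ (⊤:ℕ∞) F →
    ContDiff ℝ (k:ℕ) (fun x : ℝ×ℝ => ∫ σ in (0:ℝ)..1, F (x,σ)) := by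
  intro k
  induction k with
  | zero =>
      intro F hF
      rw [show ((0:ℕ):WithTop ℕ∞) = 0 from rfl, contDiff_zero]
      exact continuous_iff_continuousAt.2 fun x =>
        (hasFDerivAt_paramInt hF x).differentiableAt.continuousAt
  | succ k ih =>
      intro F hF
      have hcast : ((k+1:ℕ) : WithTop ℕ∞) = (k:ℕ) + 1 := by exact_mod_cast rfl
      rw [hcast, contDiff_succ_iff_fderiv]
      refine ⟨fun x => (hasFDerivAt_paramInt hF x).differentiableAt, by simp, ?_⟩
      have hFd : Continuous (fderiv ℝ F) :=
        (hF.fderiv_right (m := (⊤:ℕ∞)) (by exact_mod_cast le_top)).continuous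
      set F₁ : (ℝ×ℝ)×ℝ → ℝ := fun q => fderiv ℝ F q ((((1:ℝ),(0:ℝ)), (0:ℝ))) with hF₁
      set F₂ : (ℝ×ℝ)×ℝ → ℝ := fun q => fderiv ℝ F q ((((0:ℝ),(1:ℝ)), (0:ℝ))) with hF₂
      have hF₁s : ContDiff ℝ (⊤:ℕ∞) F₁ :=
        (hF.fderiv_right (by exact_mod_cast le_top)).clm_apply contDiff_const
      have hF₂s : ContDiff ℝ (⊤:ℕ∞) F₂ :=
        (hF.fderiv_right (by exact_mod_cast le_top)).clm_apply contDiff_const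
      have key : fderiv ℝ (fun x : ℝ×ℝ => ∫ σ in (0:ℝ)..1, F (x,σ))
          = fun x => (∫ σ in (0:ℝ)..1, F₁ (x,σ)) • ContinuousLinearMap.fst ℝ ℝ ℝ
              + (∫ σ in (0:ℝ)..1, F₂ (x,σ)) • ContinuousLinearMap.snd ℝ ℝ ℝ := by
        funext x
        rw [(hasFDerivAt_paramInt hF x).fderiv]
        have hint : IntervalIntegrable
            (fun σ => (fderiv ℝ F (x,σ)).comp (ContinuousLinearMap.inl ℝ (ℝ×ℝ) ℝ))
            volume 0 1 := by
          apply Continuous.intervalIntegrable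
          exact Continuous.clm_comp (hFd.comp (by fun_prop)) continuous_const
        refine ContinuousLinearMap.ext fun v => ?_
        rw [ContinuousLinearMap.intervalIntegral_apply hint]
        have hv : ∀ σ : ℝ,
            ((fderiv ℝ F (x,σ)).comp (ContinuousLinearMap.inl ℝ (ℝ×ℝ) ℝ)) v
              = v.1 * F₁ (x,σ) + v.2 * F₂ (x,σ) := by
          intro σ
          have hvv : ((v, (0:ℝ)) : (ℝ×ℝ)×ℝ)
              = v.1 • (((1:ℝ),(0:ℝ)), (0:ℝ)) + v.2 • (((0:ℝ),(1:ℝ)), (0:ℝ)) := by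
            simp [Prod.ext_iff]
          show fderiv ℝ F (x,σ) (v, 0) = _
          rw [hvv, map_add, (fderiv ℝ F (x,σ)).map_smul, (fderiv ℝ F (x,σ)).map_smul]
          simp [F₁, F₂, smul_eq_mul]
        rw [intervalIntegral.integral_congr (g := fun σ => v.1 * F₁ (x,σ) + v.2 * F₂ (x,σ))
          (fun σ _ => hv σ)]
        rw [intervalIntegral.integral_add
            ((Continuous.intervalIntegrable (by fun_prop : Continuous fun σ => v.1 * F₁ (x,σ))) 0 1)
            ((Continuous.intervalIntegrable (by fun_prop : Continuous fun σ => v.2 * F₂ (x,σ))) 0 1),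
          intervalIntegral.integral_const_mul, intervalIntegral.integral_const_mul]
        simp [smul_eq_mul]
        ring
      rw [key]
      exact ((ih hF₁s).smul contDiff_const).add ((ih hF₂s).smul contDiff_const)

end Param

section Ker

noncomputable def D1 (K : ℝ×ℝ → ℝ) : ℝ×ℝ → ℝ := fun p => deriv (fun s => K (s, p.2)) p.1

lemma slice1_hasDerivAt {K : ℝ×ℝ → ℝ} (hK : ContDiff ℝ (⊤:ℕ∞) K) (t η : ℝ) :
    HasDerivAt (fun s => K (s, η)) (dd K (1,0) (t,η)) t :=
  dd_curve hK ((hasDerivAt_id t).prodMk (hasDerivAt_const t η))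

lemma D1_eq {K : ℝ×ℝ → ℝ} (hK : ContDiff ℝ (⊤:ℕ∞) K) : D1 K = dd K (1,0) :=
  funext fun p => (slice1_hasDerivAt hK p.1 p.2).deriv

lemma contDiff_D1 {K : ℝ×ℝ → ℝ} (hK : ContDiff ℝ (⊤:ℕ∞) K) : ContDiff ℝ (⊤:ℕ∞) (D1 K) := by
  rw [D1_eq hK]; exact contDiff_dd hK _

lemma hasDerivAt_slice1 {K : ℝ×ℝ → ℝ} (hK : ContDiff ℝ (⊤:ℕ∞) K) (t η : ℝ) :
    HasDerivAt (fun s => K (s, η)) (D1 K (t,η)) t := by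
  rw [D1_eq hK]; exact slice1_hasDerivAt hK t η

lemma contDiff_G {g : ℝ×ℝ → ℝ} (hg : ContDiff ℝ (⊤:ℕ∞) g) :
    ContDiff ℝ (⊤:ℕ∞) (fun p : ℝ×ℝ => ∫ ξ in (0:ℝ)..p.2, g (p.1, ξ)) := by
  have key : (fun p : ℝ×ℝ => ∫ ξ in (0:ℝ)..p.2, g (p.1, ξ))
      = fun p : ℝ×ℝ => ∫ σ in (0:ℝ)..1, p.2 * g (p.1, p.2*σ) := by
    funext p
    have h1 : ∫ σ in (0:ℝ)..1, p.2 * g (p.1, p.2*σ)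
        = p.2 • ∫ σ in (0:ℝ)..1, (fun ξ => g (p.1, ξ)) (p.2*σ) := by
      rw [← intervalIntegral.integral_smul]; rfl
    rw [h1, intervalIntegral.smul_integral_comp_mul_left (fun ξ => g (p.1, ξ)) p.2]
    norm_num
  rw [key]
  have hsm : ContDiff ℝ (⊤:ℕ∞) (fun q : (ℝ×ℝ)×ℝ => q.1.2 * g (q.1.1, q.1.2*q.2)) := by
    apply ContDiff.mul (by fun_prop)
    exact hg.comp (by fun_prop)
  exact contDiff_infty.2 fun k => contDiff_paramInt k hsm

noncomputable def Tker (K : ℝ×ℝ → ℝ) : ℝ×ℝ → ℝ :=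
  fun p => K (p.1, p.1) + ∫ ξ in p.2..p.1, D1 K (p.1, ξ)

set_option maxHeartbeats 1000000 in
lemma contDiff_Tker {K : ℝ×ℝ → ℝ} (hK : ContDiff ℝ (⊤:ℕ∞) K) :
    ContDiff ℝ (⊤:ℕ∞) (Tker K) := by
  have hD1 := contDiff_D1 hK
  have hDc : Continuous (D1 K) := hD1.continuous
  have key : Tker K = fun p : ℝ×ℝ =>
      K (p.1, p.1) + ((∫ ξ in (0:ℝ)..p.1, D1 K (p.1, ξ)) - ∫ ξ in (0:ℝ)..p.2, D1 K (p.1, ξ)) := by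
    funext p
    unfold Tker
    have hc1 : Continuous fun ξ : ℝ => D1 K (p.1, ξ) :=
      hDc.comp (continuous_const.prodMk continuous_id)
    congr 1
    exact (intervalIntegral.integral_interval_sub_left (hc1.intervalIntegrable 0 p.1)
      (hc1.intervalIntegrable 0 p.2)).symm
  rw [key]
  have hG := contDiff_G hD1
  apply ContDiff.add
  · have h2 : (fun p : ℝ×ℝ => K (p.1,p.1)) = K ∘ (fun p : ℝ×ℝ => (p.1,p.1)) := rfl
    rw [h2]; exact hK.comp (contDiff_fst.prodMk contDiff_fst)
  · apply ContDiff.sub _ hG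
    have h3 : (fun p : ℝ×ℝ => ∫ ξ in (0:ℝ)..p.1, D1 K (p.1,ξ))
        = (fun p : ℝ×ℝ => ∫ ξ in (0:ℝ)..p.2, D1 K (p.1,ξ)) ∘ (fun p : ℝ×ℝ => (p.1,p.1)) := rfl
    rw [h3]; exact hG.comp (contDiff_fst.prodMk contDiff_fst)

lemma Tker_diag (K : ℝ×ℝ → ℝ) (t : ℝ) : Tker K (t,t) = K (t,t) := by
  simp [Tker]

lemma Tker_hasDerivAt_eta {K : ℝ×ℝ → ℝ} (hK : ContDiff ℝ (⊤:ℕ∞) K) (t η : ℝ) :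
    HasDerivAt (fun s => Tker K (t, s)) (-(D1 K (t,η))) η := by
  have hDc : Continuous fun ξ => D1 K (t, ξ) :=
    (contDiff_D1 hK).continuous.comp (continuous_const.prodMk continuous_id)
  have h := intervalIntegral.integral_hasDerivAt_left
    ((hDc.intervalIntegrable η t))
    (hDc.stronglyMeasurableAtFilter volume (nhds η)) hDc.continuousAt
  exact (h.const_add (K (t,t)))

end Ker

section Leib

lemma leib {Φ : ℝ×ℝ → ℝ} (hΦ : ContDiff ℝ (⊤:ℕ∞) Φ) (t₀ : ℝ) :
    HasDerivAt (fun t => ∫ η in (0:ℝ)..t, Φ (t,η))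
      (Φ (t₀,t₀) + ∫ η in (0:ℝ)..t₀, D1 Φ (t₀,η)) t₀ := by
  have hc : Continuous Φ := hΦ.continuous
  have hD : Continuous (D1 Φ) := (contDiff_D1 hΦ).continuous
  set Ψ : ℝ → ℝ → ℝ := fun t η => Φ (t,η) - Φ (t₀,η) with hΨ
  have hΨc : ∀ t, Continuous (Ψ t) := fun t => by
    apply Continuous.sub <;> exact hc.comp (continuous_const.prodMk continuous_id)
  have hslice : ∀ t : ℝ, Continuous fun η => Φ (t, η) := fun t =>
    hc.comp (continuous_const.prodMk continuous_id)
  have heq : (fun t => ∫ η in (0:ℝ)..t, Φ (t,η))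
      = fun t => (∫ η in (0:ℝ)..t, Φ (t₀,η))
          + ((∫ η in (0:ℝ)..t₀, Ψ t η) + (∫ η in t₀..t, Ψ t η)) := by
    funext t
    rw [intervalIntegral.integral_add_adjacent_intervals ((hΨc t).intervalIntegrable 0 t₀)
      ((hΨc t).intervalIntegrable t₀ t),
      ← intervalIntegral.integral_add ((hslice t₀).intervalIntegrable 0 t)
        ((hΨc t).intervalIntegrable 0 t)]
    congr 1; funext η; simp [hΨ]
  -- part 1 : FTC
  have h1 : HasDerivAt (fun t => ∫ η in (0:ℝ)..t, Φ (t₀,η)) (Φ (t₀,t₀)) t₀ :=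
    intervalIntegral.integral_hasDerivAt_right ((hslice t₀).intervalIntegrable 0 t₀)
      ((hslice t₀).stronglyMeasurableAtFilter volume (nhds t₀)) (hslice t₀).continuousAt
  -- bound for D1 Φ on a compact box
  obtain ⟨M, hM⟩ := ((isCompact_Icc (a := t₀ - 1) (b := t₀ + 1)).prod
    (isCompact_Icc (a := t₀ - 1) (b := t₀ + 1))).exists_bound_of_continuousOn hD.continuousOn
  set M' : ℝ := max M 0 with hM'
  have hM'0 : 0 ≤ M' := le_max_right _ _
  have hMb : ∀ s η : ℝ, s ∈ Set.Icc (t₀-1) (t₀+1) → η ∈ Set.Icc (t₀-1) (t₀+1) →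
      ‖D1 Φ (s,η)‖ ≤ M' := fun s η hs hη => le_trans (hM (s,η) ⟨hs, hη⟩) (le_max_left _ _)
  -- part 2 : dominated
  have h2 : HasDerivAt (fun t => ∫ η in (0:ℝ)..t₀, Ψ t η)
      (∫ η in (0:ℝ)..t₀, D1 Φ (t₀,η)) t₀ := by
    obtain ⟨M₂, hM₂⟩ := ((isCompact_Icc (a := t₀ - 1) (b := t₀ + 1)).prod
      (isCompact_uIcc (a := (0:ℝ)) (b := t₀))).exists_bound_of_continuousOn hD.continuousOn
    have := (intervalIntegral.hasDerivAt_integral_of_dominated_loc_of_deriv_le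
      (F := Ψ) (F' := fun t η => D1 Φ (t,η)) (bound := fun _ => M₂) (a := 0) (b := t₀)
      (x₀ := t₀) (s := Metric.ball t₀ 1) (μ := volume) (Metric.ball_mem_nhds _ one_pos)
      (Filter.Eventually.of_forall fun t => ((hΨc t).aestronglyMeasurable))
      ((hΨc t₀).intervalIntegrable 0 t₀)
      ((hD.comp (continuous_const.prodMk continuous_id)).aestronglyMeasurable)
      ?_ intervalIntegrable_const ?_).2
    · simpa [hΨ] using this
    · refine Filter.Eventually.of_forall fun η hη t ht => ?_
      refine hM₂ (t,η) ⟨?_, Set.mem_of_mem_of_subset hη Set.uIoc_subset_uIcc⟩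
      have := Metric.mem_ball.1 ht
      rw [Real.dist_eq] at this
      constructor <;> [linarith [abs_lt.1 this |>.1]; linarith [abs_lt.1 this |>.2]]
    · refine Filter.Eventually.of_forall fun η hη t ht => ?_
      exact (hasDerivAt_slice1 hΦ t η).sub_const _
  -- part 3 : little-o
  have h3 : HasDerivAt (fun t => ∫ η in t₀..t, Ψ t η) 0 t₀ := by
    rw [hasDerivAt_iff_isLittleO]
    simp only [intervalIntegral.integral_same, smul_zero, sub_zero]
    rw [Asymptotics.isLittleO_iff]
    intro c hc0
    have hball := Metric.ball_mem_nhds t₀ (lt_min one_pos (div_pos hc0 (by linarith : (0:ℝ) < M' + 1)))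
    filter_upwards [hball] with t ht
    rw [Metric.mem_ball, Real.dist_eq, lt_min_iff] at ht
    obtain ⟨ht1, ht2⟩ := ht
    have htIcc : t ∈ Set.Icc (t₀-1) (t₀+1) := by
      constructor <;> [linarith [abs_lt.1 ht1 |>.1]; linarith [abs_lt.1 ht1 |>.2]]
    have ht₀Icc : t₀ ∈ Set.Icc (t₀-1) (t₀+1) := by constructor <;> linarith
    have hlip : ∀ η ∈ Set.uIoc t₀ t, ‖Ψ t η‖ ≤ M' * |t - t₀| := by
      intro η hη
      have hηIcc : η ∈ Set.Icc (t₀-1) (t₀+1) := by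
        have h' : η ∈ Set.uIcc t₀ t := Set.mem_of_mem_of_subset hη Set.uIoc_subset_uIcc
        exact Set.mem_of_mem_of_subset h'
          (Set.uIcc_subset_Icc ⟨ht₀Icc.1, ht₀Icc.2⟩ ⟨htIcc.1, htIcc.2⟩)
      have := Convex.norm_image_sub_le_of_norm_hasDerivWithin_le
        (f := fun s => Φ (s,η)) (f' := fun s => D1 Φ (s,η))
        (s := Set.Icc (t₀-1) (t₀+1)) (C := M')
        (fun s hs => (hasDerivAt_slice1 hΦ s η).hasDerivWithinAt)
        (fun s hs => hMb s η hs hηIcc) (convex_Icc _ _) ht₀Icc htIcc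
      simpa [hΨ, Real.norm_eq_abs] using this
    have hbd := intervalIntegral.norm_integral_le_of_norm_le_const (C := M' * |t - t₀|)
      (f := Ψ t) (a := t₀) (b := t) hlip
    have habs : |t - t₀| ≤ c / (M' + 1) := le_of_lt ht2
    have hfin : M' * |t - t₀| * |t - t₀| ≤ c * |t - t₀| := by
      have h5 : (M' + 1) * |t - t₀| ≤ c := by
        rw [mul_comm]
        exact ((lt_div_iff₀ (by linarith : (0:ℝ) < M' + 1)).1 ht2).le
      nlinarith [abs_nonneg (t - t₀)]
    calc ‖∫ η in t₀..t, Ψ t η‖ ≤ M' * |t - t₀| * |t - t₀| := by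
          simpa [abs_sub_comm] using hbd
      _ ≤ c * |t - t₀| := hfin
      _ = c * ‖t - t₀‖ := by rw [Real.norm_eq_abs]
  rw [heq]
  simpa using h1.fun_add (h2.fun_add h3)

end Leib

section Step

lemma deriv_smooth {w : ℝ → ℝ} (hw : ContDiff ℝ (⊤:ℕ∞) w) : ContDiff ℝ (⊤:ℕ∞) (deriv w) := by
  have : deriv w = fun t => fderiv ℝ w t 1 := by
    funext t; rw [← fderiv_apply_one_eq_deriv]
  rw [this]
  exact (hw.fderiv_right (by exact_mod_cast le_top)).clm_apply contDiff_const

lemma step {K : ℝ×ℝ → ℝ} (hK : ContDiff ℝ (⊤:ℕ∞) K) {w : ℝ → ℝ}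
    (hw : ContDiff ℝ (⊤:ℕ∞) w) (t₀ : ℝ) :
    HasDerivAt (fun t => ∫ η in (0:ℝ)..t, K (t,η) * w η)
      ((∫ η in (0:ℝ)..t₀, Tker K (t₀,η) * deriv w η) + Tker K (t₀,0) * w 0) t₀ := by
  have hΦ : ContDiff ℝ (⊤:ℕ∞) (fun p : ℝ×ℝ => K p * w p.2) :=
    hK.mul (hw.comp contDiff_snd)
  have h := leib hΦ t₀
  have hD1 : ∀ η, D1 (fun p : ℝ×ℝ => K p * w p.2) (t₀,η) = D1 K (t₀,η) * w η := fun η =>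
    ((hasDerivAt_slice1 hK t₀ η).mul_const (w η)).deriv
  have hDc : Continuous (D1 K) := (contDiff_D1 hK).continuous
  have hDslice : Continuous fun η => D1 K (t₀, η) :=
    hDc.comp (continuous_const.prodMk continuous_id)
  have hwd : Continuous (deriv w) := (deriv_smooth hw).continuous
  have hTc : Continuous fun η => Tker K (t₀, η) :=
    (contDiff_Tker hK).continuous.comp (continuous_const.prodMk continuous_id)
  have hibp := intervalIntegral.integral_mul_deriv_eq_deriv_mul
    (u := fun η => Tker K (t₀,η)) (v := w) (u' := fun η => -(D1 K (t₀,η))) (v' := deriv w)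
    (fun η _ => Tker_hasDerivAt_eta hK t₀ η)
    (fun η _ => (hw.differentiable (by simp) η).hasDerivAt)
    ((hDslice.neg).intervalIntegrable 0 t₀) (hwd.intervalIntegrable 0 t₀)
  have hneg : ∫ η in (0:ℝ)..t₀, (-(D1 K (t₀,η))) * w η
      = - ∫ η in (0:ℝ)..t₀, D1 K (t₀,η) * w η := by
    simp [neg_mul, intervalIntegral.integral_neg]
  have hval : (fun p : ℝ×ℝ => K p * w p.2) (t₀,t₀)
      + (∫ η in (0:ℝ)..t₀, D1 (fun p : ℝ×ℝ => K p * w p.2) (t₀,η))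
      = (∫ η in (0:ℝ)..t₀, Tker K (t₀,η) * deriv w η) + Tker K (t₀,0) * w 0 := by
    rw [intervalIntegral.integral_congr (g := fun η => D1 K (t₀,η) * w η) (fun η _ => hD1 η)]
    rw [hibp, hneg]
    simp only []
    rw [Tker_diag K t₀]
    show K (t₀,t₀) * w t₀ + _ = _
    ring
  exact hval ▸ h

end Step

section OpA
variable {n : ℕ}

lemma pd_mul (i : Fin n) {φ ψ : (Fin n → ℝ) → ℝ} {x : Fin n → ℝ}
    (hφ : DifferentiableAt ℝ φ x) (hψ : DifferentiableAt ℝ ψ x) :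
    pd i (fun y => φ y * ψ y) x = pd i φ x * ψ x + φ x * pd i ψ x := by
  unfold pd
  rw [fderiv_fun_mul hφ hψ]
  simp [smul_eq_mul]
  ring

lemma opA_expand (aij : Fin n → Fin n → (Fin n → ℝ) → ℝ)
    (ha2 : ∀ i j, Differentiable ℝ (aij i j))
    {U : (Fin n → ℝ) × ℝ → ℝ} (hU : ContDiff ℝ (⊤:ℕ∞) U) (x : Fin n → ℝ) (t : ℝ) :
    opA aij (fun y => U (y,t)) x
      = ∑ i, ∑ j, (pd i (aij i j) x * DxV (Pi.single j 1) U (x,t)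
          + aij i j x * DxV (Pi.single i 1) (DxV (Pi.single j 1) U) (x,t)) := by
  unfold opA
  refine Finset.sum_congr rfl fun i _ => Finset.sum_congr rfl fun j _ => ?_
  have hψ : DifferentiableAt ℝ (fun y => DxV (Pi.single j 1) U (y,t)) x :=
    ((contDiff_sliceX (contDiff_DxV hU (Pi.single j 1)) t).differentiable
      (by simp)).differentiableAt
  exact pd_mul i ((ha2 i j).differentiableAt) hψ

lemma opA_hasDerivAt (aij : Fin n → Fin n → (Fin n → ℝ) → ℝ)
    (ha2 : ∀ i j, Differentiable ℝ (aij i j))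
    {U : (Fin n → ℝ) × ℝ → ℝ} (hU : ContDiff ℝ (⊤:ℕ∞) U) (x : Fin n → ℝ) (t : ℝ) :
    HasDerivAt (fun s => opA aij (fun y => U (y,s)) x)
      (opA aij (fun y => Dt U (y,t)) x) t := by
  have heq : (fun s => opA aij (fun y => U (y,s)) x)
      = fun s => ∑ i, ∑ j, (pd i (aij i j) x * DxV (Pi.single j 1) U (x,s)
          + aij i j x * DxV (Pi.single i 1) (DxV (Pi.single j 1) U) (x,s)) :=
    funext fun s => opA_expand aij ha2 hU x s
  rw [heq]
  have hder : HasDerivAt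
      (fun s => ∑ i, ∑ j, (pd i (aij i j) x * DxV (Pi.single j 1) U (x,s)
          + aij i j x * DxV (Pi.single i 1) (DxV (Pi.single j 1) U) (x,s)))
      (∑ i, ∑ j, (pd i (aij i j) x * Dt (DxV (Pi.single j 1) U) (x,t)
          + aij i j x * Dt (DxV (Pi.single i 1) (DxV (Pi.single j 1) U)) (x,t))) t := by
    apply HasDerivAt.fun_sum
    intro i _
    apply HasDerivAt.fun_sum
    intro j _
    exact ((hasDerivAt_sliceT (contDiff_DxV hU _) x t).const_mul _).add
      ((hasDerivAt_sliceT (contDiff_DxV (contDiff_DxV hU _) _) x t).const_mul _)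
  have hcomm1 : ∀ j : Fin n, Dt (DxV (Pi.single j 1) U) = DxV (Pi.single j 1) (Dt U) :=
    fun j => Dt_DxV_comm hU _
  have hval : (∑ i, ∑ j, (pd i (aij i j) x * Dt (DxV (Pi.single j 1) U) (x,t)
          + aij i j x * Dt (DxV (Pi.single i 1) (DxV (Pi.single j 1) U)) (x,t)))
      = opA aij (fun y => Dt U (y,t)) x := by
    rw [opA_expand aij ha2 (contDiff_Dt hU) x t]
    refine Finset.sum_congr rfl fun i _ => Finset.sum_congr rfl fun j _ => ?_
    rw [hcomm1 j, Dt_DxV_comm (contDiff_DxV hU (Pi.single j 1)) (Pi.single i 1), hcomm1 j]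
  exact hval ▸ hder

lemma opA_zero (aij : Fin n → Fin n → (Fin n → ℝ) → ℝ) (x : Fin n → ℝ) :
    opA aij (fun _ => (0:ℝ)) x = 0 := by
  unfold opA
  refine Finset.sum_eq_zero fun i _ => Finset.sum_eq_zero fun j _ => ?_
  have h1 : (fun y => aij i j y * pd j (fun _ => (0:ℝ)) y) = fun _ => (0:ℝ) := by
    funext y
    have : pd j (fun _ => (0:ℝ)) y = 0 := by
      unfold pd; rw [fderiv_const_apply]; rfl
    rw [this, mul_zero]
  rw [h1]
  unfold pd; rw [fderiv_const_apply]; rfl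

end OpA

section MemStep
variable {n : ℕ}

lemma contDiff_TkerIter {K : ℝ×ℝ → ℝ} (hK : ContDiff ℝ (⊤:ℕ∞) K) (m : ℕ) :
    ContDiff ℝ (⊤:ℕ∞) (Tker^[m] K) := by
  induction m generalizing K with
  | zero => exact hK
  | succ m ih => rw [Function.iterate_succ_apply]; exact ih (contDiff_Tker hK)

lemma deriv_DtIter {E : Type*} [NormedAddCommGroup E] [NormedSpace ℝ E]
    {U : E × ℝ → ℝ} (hU : ContDiff ℝ (⊤:ℕ∞) U) (m : ℕ) (x : E) :
    deriv (fun η => Dt^[m] U (x,η)) = fun η => Dt^[m+1] U (x,η) := by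
  funext η
  rw [Function.iterate_succ_apply' Dt m U]
  exact (hasDerivAt_sliceT (contDiff_DtIter hU m) x η).deriv

lemma pd_zero (i : Fin n) (x : Fin n → ℝ) : pd i (fun _ => (0:ℝ)) x = 0 := by
  unfold pd; rw [fderiv_const_apply]; rfl


lemma intervalIntegrable_sum {ι : Type*} [Fintype ι] {f : ι → ℝ → ℝ} {a b : ℝ}
    (h : ∀ i, IntervalIntegrable (f i) volume a b) :
    IntervalIntegrable (fun η => ∑ i, f i η) volume a b := by
  have heq : (fun η => ∑ i, f i η) = ∑ i, f i := by
    funext η; rw [Finset.sum_apply]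
  rw [heq]
  exact IntervalIntegrable.sum _ fun i _ => h i

set_option maxHeartbeats 1000000 in
lemma memStep (K0 : ℝ×ℝ→ℝ) (K1 : Fin n → ℝ×ℝ→ℝ) (K2 : Fin n → Fin n → ℝ×ℝ→ℝ)
    (w0 : ℝ→ℝ) (w1 : Fin n → ℝ→ℝ) (w2 : Fin n → Fin n → ℝ→ℝ)
    (hK0 : ContDiff ℝ (⊤:ℕ∞) K0) (hK1 : ∀ i, ContDiff ℝ (⊤:ℕ∞) (K1 i))
    (hK2 : ∀ i j, ContDiff ℝ (⊤:ℕ∞) (K2 i j))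
    (hw0 : ContDiff ℝ (⊤:ℕ∞) w0) (hw1 : ∀ i, ContDiff ℝ (⊤:ℕ∞) (w1 i))
    (hw2 : ∀ i j, ContDiff ℝ (⊤:ℕ∞) (w2 i j)) (t₀ : ℝ) :
    HasDerivAt (fun t => ∫ η in (0:ℝ)..t,
        (K0 (t,η) * w0 η + (∑ i, K1 i (t,η) * w1 i η) + ∑ i, ∑ j, K2 i j (t,η) * w2 i j η))
      ((∫ η in (0:ℝ)..t₀,
        (Tker K0 (t₀,η) * deriv w0 η + (∑ i, Tker (K1 i) (t₀,η) * deriv (w1 i) η)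
          + ∑ i, ∑ j, Tker (K2 i j) (t₀,η) * deriv (w2 i j) η))
        + (Tker K0 (t₀,0) * w0 0 + (∑ i, Tker (K1 i) (t₀,0) * w1 i 0)
          + ∑ i, ∑ j, Tker (K2 i j) (t₀,0) * w2 i j 0)) t₀ := by
  have hc : ∀ (K : ℝ×ℝ→ℝ) (w : ℝ→ℝ), ContDiff ℝ (⊤:ℕ∞) K → ContDiff ℝ (⊤:ℕ∞) w →
      ∀ t a b : ℝ, IntervalIntegrable (fun η => K (t,η) * w η) volume a b := by
    intro K w hK hw t a b
    exact (Continuous.mul (hK.continuous.comp (continuous_const.prodMk continuous_id))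
      hw.continuous).intervalIntegrable a b
  -- split of an integral of this shape
  have hsplit : ∀ (K0' : ℝ×ℝ→ℝ) (K1' : Fin n → ℝ×ℝ→ℝ) (K2' : Fin n → Fin n → ℝ×ℝ→ℝ)
      (v0 : ℝ→ℝ) (v1 : Fin n → ℝ→ℝ) (v2 : Fin n → Fin n → ℝ→ℝ),
      ContDiff ℝ (⊤:ℕ∞) K0' → (∀ i, ContDiff ℝ (⊤:ℕ∞) (K1' i)) →
      (∀ i j, ContDiff ℝ (⊤:ℕ∞) (K2' i j)) → ContDiff ℝ (⊤:ℕ∞) v0 →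
      (∀ i, ContDiff ℝ (⊤:ℕ∞) (v1 i)) → (∀ i j, ContDiff ℝ (⊤:ℕ∞) (v2 i j)) →
      ∀ t : ℝ, (∫ η in (0:ℝ)..t,
        (K0' (t,η) * v0 η + (∑ i, K1' i (t,η) * v1 i η) + ∑ i, ∑ j, K2' i j (t,η) * v2 i j η))
        = (∫ η in (0:ℝ)..t, K0' (t,η) * v0 η)
          + (∑ i, ∫ η in (0:ℝ)..t, K1' i (t,η) * v1 i η)
          + ∑ i, ∑ j, ∫ η in (0:ℝ)..t, K2' i j (t,η) * v2 i j η := by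
    intro K0' K1' K2' v0 v1 v2 hK0' hK1' hK2' hv0 hv1 hv2 t
    have i1 : IntervalIntegrable (fun η => ∑ i, K1' i (t,η) * v1 i η) volume 0 t :=
      intervalIntegrable_sum fun i => hc _ _ (hK1' i) (hv1 i) t 0 t
    have i2 : IntervalIntegrable (fun η => ∑ i, ∑ j, K2' i j (t,η) * v2 i j η) volume 0 t :=
      intervalIntegrable_sum fun i => intervalIntegrable_sum fun j =>
        hc _ _ (hK2' i j) (hv2 i j) t 0 t
    rw [intervalIntegral.integral_add ((hc _ _ hK0' hv0 t 0 t).add i1) i2,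
      intervalIntegral.integral_add (hc _ _ hK0' hv0 t 0 t) i1,
      intervalIntegral.integral_finset_sum (fun i _ => hc _ _ (hK1' i) (hv1 i) t 0 t),
      intervalIntegral.integral_finset_sum
        (fun i _ => intervalIntegrable_sum fun j => hc _ _ (hK2' i j) (hv2 i j) t 0 t)]
    congr 1
    exact Finset.sum_congr rfl fun i _ =>
      intervalIntegral.integral_finset_sum (fun j _ => hc _ _ (hK2' i j) (hv2 i j) t 0 t)
  have heq : (fun t => ∫ η in (0:ℝ)..t,
        (K0 (t,η) * w0 η + (∑ i, K1 i (t,η) * w1 i η) + ∑ i, ∑ j, K2 i j (t,η) * w2 i j η))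
      = fun t => (∫ η in (0:ℝ)..t, K0 (t,η) * w0 η)
          + (∑ i, ∫ η in (0:ℝ)..t, K1 i (t,η) * w1 i η)
          + ∑ i, ∑ j, ∫ η in (0:ℝ)..t, K2 i j (t,η) * w2 i j η :=
    funext fun t => hsplit K0 K1 K2 w0 w1 w2 hK0 hK1 hK2 hw0 hw1 hw2 t
  rw [heq]
  have h1 : HasDerivAt (fun t => ∑ i, ∫ η in (0:ℝ)..t, K1 i (t,η) * w1 i η)
      (∑ i, ((∫ η in (0:ℝ)..t₀, Tker (K1 i) (t₀,η) * deriv (w1 i) η)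
        + Tker (K1 i) (t₀,0) * w1 i 0)) t₀ :=
    HasDerivAt.fun_sum fun i _ => step (hK1 i) (hw1 i) t₀
  have h2 : HasDerivAt (fun t => ∑ i, ∑ j, ∫ η in (0:ℝ)..t, K2 i j (t,η) * w2 i j η)
      (∑ i, ∑ j, ((∫ η in (0:ℝ)..t₀, Tker (K2 i j) (t₀,η) * deriv (w2 i j) η)
        + Tker (K2 i j) (t₀,0) * w2 i j 0)) t₀ :=
    HasDerivAt.fun_sum fun i _ => HasDerivAt.fun_sum fun j _ => step (hK2 i j) (hw2 i j) t₀
  have hder := ((step hK0 hw0 t₀).fun_add h1).fun_add h2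
  convert hder using 1
  · rfl
  · rfl
  rw [hsplit (Tker K0) (fun i => Tker (K1 i)) (fun i j => Tker (K2 i j))
    (deriv w0) (fun i => deriv (w1 i)) (fun i j => deriv (w2 i j))
    (contDiff_Tker hK0) (fun i => contDiff_Tker (hK1 i)) (fun i j => contDiff_Tker (hK2 i j))
    (deriv_smooth hw0) (fun i => deriv_smooth (hw1 i)) (fun i j => deriv_smooth (hw2 i j)) t₀]
  simp only [Finset.sum_add_distrib]
  ring

end MemStep


set_option maxHeartbeats 4000000 in
/-- The system (3.16) satisfied by u₃ = ∂ₜ³u. -/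
theorem stmt5
    {n : ℕ} (hn : 1 ≤ n) (Ω : Set (Fin n → ℝ))
    (hΩo : IsOpen Ω) (hΩb : Bornology.IsBounded Ω)
    (aij : Fin n → Fin n → (Fin n → ℝ) → ℝ) (ha : CoeffOK aij)
    (T : ℝ) (hT : 0 < T)
    (b0 : (Fin n → ℝ) → ℝ → ℝ → ℝ)
    (b1 : Fin n → (Fin n → ℝ) → ℝ → ℝ → ℝ)
    (b2 : Fin n → Fin n → (Fin n → ℝ) → ℝ → ℝ → ℝ)
    (hb0 : SmoothBdd3 b0) (hb1 : ∀ i, SmoothBdd3 (b1 i))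
    (hb2 : ∀ i j, SmoothBdd3 (b2 i j))
    (R : (Fin n → ℝ) → ℝ → ℝ) (hR : SmoothBdd2 R)
    (f : (Fin n → ℝ) → ℝ) (hf : ContDiff ℝ (⊤ : ℕ∞) f)
    (hfs : ∀ x, x ∉ Ω → f x = 0)
    (u : (Fin n → ℝ) → ℝ → ℝ)
    (hu : ContDiff ℝ (⊤ : ℕ∞) (fun p : (Fin n → ℝ) × ℝ => u p.1 p.2))
    (hus : ∀ x t, x ∉ Ω → u x t = 0)
    (hpde : ∀ x ∈ Ω, ∀ t ∈ Set.Ioo (0:ℝ) T,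
      tder 2 u x t = opA aij (fun y => u y t) x + memTerm b0 b1 b2 u x t + R x t * f x)
    (hinit : ∀ x, u x 0 = 0 ∧ tder 1 u x 0 = 0) :
    (∀ x ∈ Ω, ∀ t ∈ Set.Ioo (0:ℝ) T,
      tder 2 (tder 3 u) x t
        = opA aij (fun y => tder 3 u y t) x
          + memTerm (ker1 (ker1 (ker1 b0))) (fun i => ker1 (ker1 (ker1 (b1 i))))
              (fun i j => ker1 (ker1 (ker1 (b2 i j)))) (tder 3 u) x t
          + deriv^[3] (fun s => R x s) t * f x
          + (ker1 (ker1 (ker1 b0)) x t 0 * (R x 0 * f x)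
              + (∑ i, ker1 (ker1 (ker1 (b1 i))) x t 0 * pd i (fun y => R y 0 * f y) x)
              + ∑ i, ∑ j, ker1 (ker1 (ker1 (b2 i j))) x t 0
                  * pd i (pd j (fun y => R y 0 * f y)) x)) ∧
    (∀ x ∈ Ω, tder 3 u x 0 = deriv (fun s => R x s) 0 * f x
      ∧ tder 1 (tder 3 u) x 0
          = opA aij (fun y => R y 0 * f y) x + deriv^[2] (fun s => R x s) 0 * f x) := by
  classical
  obtain ⟨-, haC1, -, -⟩ := ha
  have ha2 : ∀ i j, Differentiable ℝ (aij i j) := fun i j => (haC1 i j).differentiable one_ne_zero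
  set U0 : (Fin n → ℝ) × ℝ → ℝ := fun p => u p.1 p.2 with hU0def
  have hU0 : ContDiff ℝ (⊤:ℕ∞) U0 := hu
  set e : Fin n → (Fin n → ℝ) := fun i => Pi.single i 1 with hedef
  have hK0s : ∀ x : Fin n → ℝ, ContDiff ℝ (⊤:ℕ∞) (fun p : ℝ×ℝ => b0 x p.1 p.2) :=
    fun x => hb0.1.comp (contDiff_const.prodMk contDiff_id)
  have hK1s : ∀ (i : Fin n) (x : Fin n → ℝ), ContDiff ℝ (⊤:ℕ∞) (fun p : ℝ×ℝ => b1 i x p.1 p.2) :=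
    fun i x => (hb1 i).1.comp (contDiff_const.prodMk contDiff_id)
  have hK2s : ∀ (i j : Fin n) (x : Fin n → ℝ),
      ContDiff ℝ (⊤:ℕ∞) (fun p : ℝ×ℝ => b2 i j x p.1 p.2) :=
    fun i j x => (hb2 i j).1.comp (contDiff_const.prodMk contDiff_id)
  have hRx : ∀ x : Fin n → ℝ, ContDiff ℝ (⊤:ℕ∞) (fun τ => R x τ) :=
    fun x => hR.1.comp (contDiff_const.prodMk contDiff_id)
  have hW0 : ∀ m : ℕ, ContDiff ℝ (⊤:ℕ∞) (Dt^[m] U0) := contDiff_DtIter hU0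
  have hW1 : ∀ (m : ℕ) (i : Fin n), ContDiff ℝ (⊤:ℕ∞) (Dt^[m] (DxV (e i) U0)) :=
    fun m i => contDiff_DtIter (contDiff_DxV hU0 (e i)) m
  have hW2 : ∀ (m : ℕ) (i j : Fin n),
      ContDiff ℝ (⊤:ℕ∞) (Dt^[m] (DxV (e i) (DxV (e j) U0))) :=
    fun m i j => contDiff_DtIter (contDiff_DxV (contDiff_DxV hU0 (e j)) (e i)) m
  -- the three families of auxiliary time functions
  set N : ℕ → (Fin n → ℝ) → ℝ → ℝ := fun m x t => ∫ η in (0:ℝ)..t,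
    (Tker^[m] (fun p : ℝ×ℝ => b0 x p.1 p.2) (t,η) * Dt^[m] U0 (x,η)
      + (∑ i, Tker^[m] (fun p : ℝ×ℝ => b1 i x p.1 p.2) (t,η) * Dt^[m] (DxV (e i) U0) (x,η))
      + ∑ i, ∑ j, Tker^[m] (fun p : ℝ×ℝ => b2 i j x p.1 p.2) (t,η)
          * Dt^[m] (DxV (e i) (DxV (e j) U0)) (x,η)) with hNdef
  set P : ℕ → (Fin n → ℝ) → ℝ → ℝ :=
    fun m x s => opA aij (fun y => Dt^[m] U0 (y,s)) x with hPdef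
  set Rho : ℕ → (Fin n → ℝ) → ℝ → ℝ :=
    fun m x s => deriv^[m] (fun τ => R x τ) s * f x with hRhodef
  -- derivative facts
  have hNder : ∀ (m : ℕ) (x : Fin n → ℝ) (t₀ : ℝ), HasDerivAt (N m x)
      (N (m+1) x t₀
        + (Tker^[m+1] (fun p : ℝ×ℝ => b0 x p.1 p.2) (t₀,0) * Dt^[m] U0 (x,0)
          + (∑ i, Tker^[m+1] (fun p : ℝ×ℝ => b1 i x p.1 p.2) (t₀,0)
              * Dt^[m] (DxV (e i) U0) (x,0))
          + ∑ i, ∑ j, Tker^[m+1] (fun p : ℝ×ℝ => b2 i j x p.1 p.2) (t₀,0)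
              * Dt^[m] (DxV (e i) (DxV (e j) U0)) (x,0))) t₀ := by
    intro m x t₀
    have h := memStep (Tker^[m] (fun p : ℝ×ℝ => b0 x p.1 p.2))
      (fun i => Tker^[m] (fun p : ℝ×ℝ => b1 i x p.1 p.2))
      (fun i j => Tker^[m] (fun p : ℝ×ℝ => b2 i j x p.1 p.2))
      (fun η => Dt^[m] U0 (x,η)) (fun i η => Dt^[m] (DxV (e i) U0) (x,η))
      (fun i j η => Dt^[m] (DxV (e i) (DxV (e j) U0)) (x,η))
      (contDiff_TkerIter (hK0s x) m) (fun i => contDiff_TkerIter (hK1s i x) m)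
      (fun i j => contDiff_TkerIter (hK2s i j x) m)
      (contDiff_sliceT (hW0 m) x) (fun i => contDiff_sliceT (hW1 m i) x)
      (fun i j => contDiff_sliceT (hW2 m i j) x) t₀
    have r1 := deriv_DtIter hU0 m x
    have r2 : ∀ i : Fin n, deriv (fun η => Dt^[m] (DxV (e i) U0) (x,η))
        = fun η => Dt^[m+1] (DxV (e i) U0) (x,η) :=
      fun i => deriv_DtIter (contDiff_DxV hU0 (e i)) m x
    have r3 : ∀ i j : Fin n, deriv (fun η => Dt^[m] (DxV (e i) (DxV (e j) U0)) (x,η))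
        = fun η => Dt^[m+1] (DxV (e i) (DxV (e j) U0)) (x,η) :=
      fun i j => deriv_DtIter (contDiff_DxV (contDiff_DxV hU0 (e j)) (e i)) m x
    simp only [r1, r2, r3, ← Function.iterate_succ_apply' Tker m] at h
    exact h
  have hPder : ∀ (m : ℕ) (x : Fin n → ℝ) (t : ℝ), HasDerivAt (P m x) (P (m+1) x t) t := by
    intro m x t
    have h := opA_hasDerivAt aij ha2 (hW0 m) x t
    rw [← Function.iterate_succ_apply' Dt m U0] at h
    exact h
  have hRhoDer : ∀ (m : ℕ) (x : Fin n → ℝ) (t : ℝ),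
      HasDerivAt (Rho m x) (Rho (m+1) x t) t := by
    intro m x t
    have hd : HasDerivAt (deriv^[m] (fun τ => R x τ)) (deriv^[m+1] (fun τ => R x τ) t) t := by
      rw [Function.iterate_succ_apply' deriv m]
      exact ((ContDiff.iterate_deriv m (hRx x)).differentiable
        (by simp) t).hasDerivAt
    exact hd.mul_const (f x)
  have hNc : ∀ (m : ℕ) (x : Fin n → ℝ), Continuous (N m x) := fun m x =>
    continuous_iff_continuousAt.2 fun t => (hNder m x t).differentiableAt.continuousAt
  have hPc : ∀ (m : ℕ) (x : Fin n → ℝ), Continuous (P m x) := fun m x =>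
    continuous_iff_continuousAt.2 fun t => (hPder m x t).differentiableAt.continuousAt
  have hRhoc : ∀ (m : ℕ) (x : Fin n → ℝ), Continuous (Rho m x) := fun m x =>
    continuous_iff_continuousAt.2 fun t => (hRhoDer m x t).differentiableAt.continuousAt
  -- zero values at time 0
  have hz0 : ∀ y, U0 (y,0) = 0 := fun y => (hinit y).1
  have hz0' : (fun y => U0 (y,0)) = fun _ => (0:ℝ) := funext hz0
  have hz1 : ∀ y, Dt U0 (y,0) = 0 := fun y => (hinit y).2
  have hz1x : ∀ (i : Fin n) (x : Fin n → ℝ), DxV (e i) U0 (x,0) = 0 := by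
    intro i x
    show pd i (fun y => U0 (y,0)) x = 0
    rw [hz0']; exact pd_zero i x
  have hz2x : ∀ (i j : Fin n) (x : Fin n → ℝ), DxV (e i) (DxV (e j) U0) (x,0) = 0 := by
    intro i j x
    show pd i (fun y => DxV (e j) U0 (y,0)) x = 0
    rw [show (fun y => DxV (e j) U0 (y,0)) = fun _ => (0:ℝ) from funext fun y => hz1x j y]
    exact pd_zero i x
  have hz1t : ∀ (i : Fin n) (x : Fin n → ℝ), Dt (DxV (e i) U0) (x,0) = 0 := by
    intro i x
    rw [Dt_DxV_comm hU0 (e i)]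
    show pd i (fun y => Dt U0 (y,0)) x = 0
    rw [show (fun y => Dt U0 (y,0)) = fun _ => (0:ℝ) from funext hz1]
    exact pd_zero i x
  have hz2t : ∀ (i j : Fin n) (x : Fin n → ℝ), Dt (DxV (e i) (DxV (e j) U0)) (x,0) = 0 := by
    intro i j x
    rw [Dt_DxV_comm (contDiff_DxV hU0 (e j)) (e i)]
    show pd i (fun y => Dt (DxV (e j) U0) (y,0)) x = 0
    rw [show (fun y => Dt (DxV (e j) U0) (y,0)) = fun _ => (0:ℝ) from funext fun y => hz1t j y]
    exact pd_zero i x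
  -- time slices of u
  have hFk : ∀ (y : Fin n → ℝ) (k : ℕ),
      (deriv^[k] (u y) : ℝ → ℝ) = fun t => Dt^[k] U0 (y,t) :=
    fun y k => funext fun t => (DtIter_eq_deriv_iter (U := U0) k y t).symm
  have hFc : ∀ (y : Fin n → ℝ) (k : ℕ), Continuous (deriv^[k] (u y)) := by
    intro y k
    rw [hFk y k]
    exact (contDiff_sliceT (hW0 k) y).continuous
  have hNzero : ∀ (m : ℕ) (x : Fin n → ℝ), N m x 0 = 0 := fun m x =>
    intervalIntegral.integral_same
  have h0cl : (0:ℝ) ∈ closure (Set.Ioo (0:ℝ) T) := by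
    rw [closure_Ioo hT.ne]
    exact ⟨le_refl 0, hT.le⟩
  -- the PDE at each fixed x ∈ Ω
  have hEq0 : ∀ x ∈ Ω, Set.EqOn (deriv^[2] (u x))
      (fun t => P 0 x t + N 0 x t + Rho 0 x t) (Set.Ioo 0 T) :=
    fun x hx t ht => hpde x hx t ht
  -- value of u_tt at time 0
  have hQ : ∀ y, Dt^[2] U0 (y,0) = R y 0 * f y := by
    intro y
    have hDt2 : Dt^[2] U0 (y,0) = deriv^[2] (u y) 0 := DtIter_eq_deriv_iter (U := U0) 2 y 0
    by_cases hy : y ∈ Ω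
    · have hcl := Set.EqOn.closure (hEq0 y hy) (hFc y 2)
        (((hPc 0 y).add (hNc 0 y)).add (hRhoc 0 y))
      have h00 : deriv^[2] (u y) 0 = P 0 y 0 + N 0 y 0 + Rho 0 y 0 := hcl h0cl
      have hP00 : P 0 y 0 = 0 := by
        show opA aij (fun z => U0 (z,0)) y = 0
        rw [hz0']; exact opA_zero aij y
      rw [hP00, hNzero 0 y] at h00
      rw [hDt2, h00]
      show 0 + 0 + R y 0 * f y = R y 0 * f y
      ring
    · have huy : u y = fun _ => (0:ℝ) := funext fun t => hus y t hy
      rw [hDt2, huy, hfs y hy, mul_zero]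
      have hdc : deriv (fun _ : ℝ => (0:ℝ)) = fun _ => (0:ℝ) := by
        funext s; simp
      rw [show (2:ℕ) = 1+1 from rfl, Function.iterate_succ_apply' deriv 1,
        Function.iterate_one, hdc, hdc]
  -- iterated equations on (0,T)
  have hEq1 : ∀ x ∈ Ω, Set.EqOn (deriv^[3] (u x))
      (fun t => P 1 x t + N 1 x t + Rho 1 x t) (Set.Ioo 0 T) := by
    intro x hx t ht
    have h1 : deriv^[3] (u x) t = deriv (deriv^[2] (u x)) t := by
      rw [Function.iterate_succ_apply' deriv 2]
    rw [h1, (Filter.eventuallyEq_of_mem (isOpen_Ioo.mem_nhds ht) (hEq0 x hx)).deriv_eq,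
      (((hPder 0 x t).fun_add (hNder 0 x t)).fun_add (hRhoDer 0 x t)).deriv]
    show P 1 x t + (N 1 x t + _) + Rho 1 x t = _
    simp [hz0, hz1x, hz2x]
  have hEq2 : ∀ x ∈ Ω, Set.EqOn (deriv^[4] (u x))
      (fun t => P 2 x t + N 2 x t + Rho 2 x t) (Set.Ioo 0 T) := by
    intro x hx t ht
    have h1 : deriv^[4] (u x) t = deriv (deriv^[3] (u x)) t := by
      rw [Function.iterate_succ_apply' deriv 3]
    rw [h1, (Filter.eventuallyEq_of_mem (isOpen_Ioo.mem_nhds ht) (hEq1 x hx)).deriv_eq,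
      (((hPder 1 x t).fun_add (hNder 1 x t)).fun_add (hRhoDer 1 x t)).deriv]
    show P 2 x t + (N 2 x t + _) + Rho 2 x t = _
    simp [Function.iterate_one, hz1, hz1t, hz2t]
  -- values of second-order spatial data at time 0
  have hv1 : ∀ (i : Fin n) (x : Fin n → ℝ),
      Dt^[2] (DxV (e i) U0) (x,0) = pd i (fun y => R y 0 * f y) x := by
    intro i x
    rw [← DxV_DtIter_comm hU0 (e i) 2]
    show pd i (fun y => Dt^[2] U0 (y,0)) x = _
    rw [show (fun y => Dt^[2] U0 (y,0)) = fun y => R y 0 * f y from funext hQ]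
  have hv2 : ∀ (i j : Fin n) (x : Fin n → ℝ),
      Dt^[2] (DxV (e i) (DxV (e j) U0)) (x,0) = pd i (pd j (fun y => R y 0 * f y)) x := by
    intro i j x
    rw [← DxV_DtIter_comm (contDiff_DxV hU0 (e j)) (e i) 2]
    show pd i (fun y => Dt^[2] (DxV (e j) U0) (y,0)) x = _
    have ha2' : (fun y => Dt^[2] (DxV (e j) U0) (y,0))
        = fun y => pd j (fun z => R z 0 * f z) y := by
      funext y
      rw [← DxV_DtIter_comm hU0 (e j) 2]
      show pd j (fun z => Dt^[2] U0 (z,0)) y = _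
      rw [show (fun z => Dt^[2] U0 (z,0)) = fun z => R z 0 * f z from funext hQ]
    rw [ha2']
  refine ⟨?_, ?_⟩
  · -- main equation
    intro x hx t ht
    -- LHS to fifth derivative
    have hL : tder 2 (tder 3 u) x t = deriv^[5] (u x) t := by
      show deriv^[2] (deriv^[3] (u x)) t = _
      rw [show (5:ℕ) = 2+3 from rfl, Function.iterate_add_apply deriv 2 3 (u x)]
    have h5 : deriv^[5] (u x) t
        = P 3 x t + (N 3 x t
            + (Tker^[3] (fun p : ℝ×ℝ => b0 x p.1 p.2) (t,0) * Dt^[2] U0 (x,0)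
              + (∑ i, Tker^[3] (fun p : ℝ×ℝ => b1 i x p.1 p.2) (t,0)
                  * Dt^[2] (DxV (e i) U0) (x,0))
              + ∑ i, ∑ j, Tker^[3] (fun p : ℝ×ℝ => b2 i j x p.1 p.2) (t,0)
                  * Dt^[2] (DxV (e i) (DxV (e j) U0)) (x,0))) + Rho 3 x t := by
      have h1 : deriv^[5] (u x) t = deriv (deriv^[4] (u x)) t := by
        rw [Function.iterate_succ_apply' deriv 4]
      rw [h1, (Filter.eventuallyEq_of_mem (isOpen_Ioo.mem_nhds ht) (hEq2 x hx)).deriv_eq,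
        (((hPder 2 x t).fun_add (hNder 2 x t)).fun_add (hRhoDer 2 x t)).deriv]
    -- conversions of the right-hand side
    have e1 : opA aij (fun y => tder 3 u y t) x = P 3 x t := by
      show opA aij (fun y => tder 3 u y t) x = opA aij (fun y => Dt^[3] U0 (y,t)) x
      rw [show (fun y => tder 3 u y t) = fun y => Dt^[3] U0 (y,t) from
        funext fun y => (DtIter_eq_deriv_iter (U := U0) 3 y t).symm]
    have e2 : memTerm (ker1 (ker1 (ker1 b0))) (fun i => ker1 (ker1 (ker1 (b1 i))))
        (fun i j => ker1 (ker1 (ker1 (b2 i j)))) (tder 3 u) x t = N 3 x t := by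
      show (∫ η in (0:ℝ)..t,
        (ker1 (ker1 (ker1 b0)) x t η * tder 3 u x η
          + (∑ i, ker1 (ker1 (ker1 (b1 i))) x t η * pd i (fun y => tder 3 u y η) x)
          + ∑ i, ∑ j, ker1 (ker1 (ker1 (b2 i j))) x t η
              * pd i (pd j (fun y => tder 3 u y η)) x)) = _
      refine intervalIntegral.integral_congr fun η _ => ?_
      have ha1 : (fun y => tder 3 u y η) = fun y => Dt^[3] U0 (y,η) :=
        funext fun y => (DtIter_eq_deriv_iter (U := U0) 3 y η).symm
      have hb1' : ∀ i : Fin n, pd i (fun y => tder 3 u y η) x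
          = Dt^[3] (DxV (e i) U0) (x,η) := by
        intro i
        rw [ha1]
        show DxV (e i) (Dt^[3] U0) (x,η) = _
        rw [DxV_DtIter_comm hU0 (e i) 3]
      have hb2' : ∀ i j : Fin n, pd i (pd j (fun y => tder 3 u y η)) x
          = Dt^[3] (DxV (e i) (DxV (e j) U0)) (x,η) := by
        intro i j
        rw [ha1]
        have hinner : pd j (fun y => Dt^[3] U0 (y,η))
            = fun y' => Dt^[3] (DxV (e j) U0) (y',η) := by
          funext y'
          show DxV (e j) (Dt^[3] U0) (y',η) = _
          rw [DxV_DtIter_comm hU0 (e j) 3]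
        rw [hinner]
        show DxV (e i) (Dt^[3] (DxV (e j) U0)) (x,η) = _
        rw [DxV_DtIter_comm (contDiff_DxV hU0 (e j)) (e i) 3]
      have ht3 : tder 3 u x η = Dt^[3] U0 (x,η) := (DtIter_eq_deriv_iter (U := U0) 3 x η).symm
      simp only [ht3, hb1', hb2']
      rfl
    have e3 : (ker1 (ker1 (ker1 b0)) x t 0 * (R x 0 * f x)
          + (∑ i, ker1 (ker1 (ker1 (b1 i))) x t 0 * pd i (fun y => R y 0 * f y) x)
          + ∑ i, ∑ j, ker1 (ker1 (ker1 (b2 i j))) x t 0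
              * pd i (pd j (fun y => R y 0 * f y)) x)
        = (Tker^[3] (fun p : ℝ×ℝ => b0 x p.1 p.2) (t,0) * Dt^[2] U0 (x,0)
          + (∑ i, Tker^[3] (fun p : ℝ×ℝ => b1 i x p.1 p.2) (t,0)
              * Dt^[2] (DxV (e i) U0) (x,0))
          + ∑ i, ∑ j, Tker^[3] (fun p : ℝ×ℝ => b2 i j x p.1 p.2) (t,0)
              * Dt^[2] (DxV (e i) (DxV (e j) U0)) (x,0)) := by
      simp only [hQ x, hv1, hv2]
      rfl
    have e4 : deriv^[3] (fun s => R x s) t * f x = Rho 3 x t := rfl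
    rw [hL, h5, ← e1, ← e2, ← e3, ← e4]
    ring
  · -- initial conditions
    intro x hx
    have hcl1 := Set.EqOn.closure (hEq1 x hx) (hFc x 3)
      (((hPc 1 x).add (hNc 1 x)).add (hRhoc 1 x))
    have hcl2 := Set.EqOn.closure (hEq2 x hx) (hFc x 4)
      (((hPc 2 x).add (hNc 2 x)).add (hRhoc 2 x))
    have h30 := hcl1 h0cl
    have h40 := hcl2 h0cl
    constructor
    · show deriv^[3] (u x) 0 = deriv (fun s => R x s) 0 * f x
      rw [h30]
      have hP10 : P 1 x 0 = 0 := by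
        show opA aij (fun y => Dt^[1] U0 (y,0)) x = 0
        rw [show (fun y => Dt^[1] U0 (y,0)) = fun _ => (0:ℝ) from
          funext fun y => by rw [Function.iterate_one]; exact hz1 y]
        exact opA_zero aij x
      show P 1 x 0 + N 1 x 0 + Rho 1 x 0 = _
      rw [hP10, hNzero 1 x]
      show 0 + 0 + deriv^[1] (fun τ => R x τ) 0 * f x = _
      rw [Function.iterate_one]
      ring
    · show deriv^[1] (deriv^[3] (u x)) 0 = _
      rw [show (4:ℕ) = 1+3 from rfl] at h40
      rw [← Function.iterate_add_apply deriv 1 3 (u x), h40]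
      have hP20 : P 2 x 0 = opA aij (fun y => R y 0 * f y) x := by
        show opA aij (fun y => Dt^[2] U0 (y,0)) x = _
        rw [show (fun y => Dt^[2] U0 (y,0)) = fun y => R y 0 * f y from funext hQ]
      show P 2 x 0 + N 2 x 0 + Rho 2 x 0 = _
      rw [hP20, hNzero 2 x]
      show _ + 0 + deriv^[2] (fun τ => R x τ) 0 * f x = _
      ring
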